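/- Let G be a finite simple connected graph, let r_0 ∈ V(G), set r = (r_0, r_0) ∈ V(G□G), and let T be an even positive integer. Let w_1, …, w_{T/2} be weight functions of tree strategies of G□G rooted at r such that Σ_{t=1}^{T/2} (w_t(v) + w_t(σ(v))) ≥ T for every v ∈ V(G□G)\{r}, where σ(u_1, u_2) = (u_2, u_1). Then π(G□G, r) ≤ ⌊ẑ/T⌋ + 1, where ẑ = Σ_{t=1}^{T/2} Σ_{v∈V(G□G)\{r}} (w_t(v) + w_t(σ(v))). -/

import Mathlib

open Finset

/-- A single pebbling move on graph `G`: remove two pebbles from a vertex `u` and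
place one pebble on a vertex `v` adjacent to `u`. -/
def IsPebblingMove {V : Type*} (G : SimpleGraph V) (C C' : V → ℕ) : Prop :=
  ∃ u v, G.Adj u v ∧ 2 ≤ C u ∧
    C' u = C u - 2 ∧ C' v = C v + 1 ∧ ∀ w, w ≠ u → w ≠ v → C' w = C w

/-- A configuration `C` is `r`-solvable if some sequence of pebbling moves starting
from `C` places at least one pebble on `r`. -/
def Solvable {V : Type*} (G : SimpleGraph V) (r : V) (C : V → ℕ) : Prop :=
  ∃ C', Relation.ReflTransGen (IsPebblingMove G) C C' ∧ 1 ≤ C' r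

/-- The rooted pebbling number `π(G, r)`: the smallest `k` such that every
configuration of size `k` is `r`-solvable. -/
noncomputable def pebblingNumber {V : Type*} [Fintype V] (G : SimpleGraph V) (r : V) : ℕ :=
  sInf {k : ℕ | ∀ C : V → ℕ, (∑ v, C v) = k → Solvable G r C}

/-- A tree strategy of `G` rooted at `r`: a subtree of `G` containing `r` (encoded by its
vertex set and parent map) together with an associated nonnegative weight function. -/
structure TreeStrategy {V : Type*} (G : SimpleGraph V) (r : V) where
  /-- the vertices of the subtree -/
  verts : Set V
  /-- the parent map of the subtree (towards the root) -/
  parent : V → V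
  root_mem : r ∈ verts
  parent_mem : ∀ v ∈ verts, v ≠ r → parent v ∈ verts
  parent_adj : ∀ v ∈ verts, v ≠ r → G.Adj (parent v) v
  reaches_root : ∀ v ∈ verts, ∃ n : ℕ, parent^[n] v = r
  /-- the weight function -/
  weight : V → ℝ
  weight_nonneg : ∀ v, 0 ≤ weight v
  weight_root : weight r = 0
  weight_parent : ∀ v ∈ verts, v ≠ r → ¬ G.Adj v r → 2 * weight v ≤ weight (parent v)
  weight_zero : ∀ v ∉ verts, weight v = 0

/-!
The weight function inequality: if `C` is not `r`-solvable and `w` is the weight of a tree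
strategy, then `∑ w(v) C(v) ≤ ∑ w(v)`. As long as some vertex `v` of positive weight carries two
pebbles, `v` lies in the tree and is not adjacent to `r`, so moving a pebble from `v` to its parent
keeps `C` unsolvable and, as `2 w(v) ≤ w(v⁺)`, does not decrease the weighted sum; once no such
move is possible, every vertex of positive weight carries at most one pebble.

An automorphism `σ` of the graph fixing `r` preserves solvability, so the inequality also holds
for `C ∘ σ⁻¹`, that is, for the weights `w ∘ σ` in place of `w`. Summing over the strategies and
using the covering hypothesis gives `T · |C| ≤ ẑ` for every unsolvable `C`.
-/

section Pebbling

variable {V : Type*} {G : SimpleGraph V} {r : V}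

section Moves

variable [DecidableEq V]

def pebbleMove (C : V → ℕ) (u v : V) : V → ℕ :=
  Function.update (Function.update C u (C u - 2)) v (C v + 1)

variable {C : V → ℕ} {u v : V}

lemma isPebblingMove_pebbleMove (huv : G.Adj u v) (hu : 2 ≤ C u) :
    IsPebblingMove G C (pebbleMove C u v) :=
  ⟨u, v, huv, hu, by simp [pebbleMove, huv.ne], by simp [pebbleMove],
    fun w hwu hwv => by simp [pebbleMove, hwu, hwv]⟩

lemma cast_pebbleMove (huv : u ≠ v) (hu : 2 ≤ C u) (w : V) :
    (pebbleMove C u v w : ℝ) =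
      C w - 2 * (if w = u then 1 else 0) + (if w = v then 1 else 0) := by
  by_cases hwv : w = v
  · subst hwv; simp [pebbleMove, Ne.symm huv]
  by_cases hwu : w = u
  · subst hwu; simp [pebbleMove, hwv, Nat.cast_sub hu]
  · simp [pebbleMove, hwu, hwv]

lemma sum_mul_pebbleMove [Fintype V] (a : V → ℝ) (huv : u ≠ v) (hu : 2 ≤ C u) :
    ∑ w, a w * pebbleMove C u v w = ∑ w, a w * C w - 2 * a u + a v := by
  simp only [cast_pebbleMove huv hu, mul_add, mul_sub, sum_add_distrib, sum_sub_distrib,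
    mul_ite, mul_one, mul_zero, sum_ite_eq', mem_univ, if_true]
  ring

lemma sum_pebbleMove_lt [Fintype V] (huv : u ≠ v) (hu : 2 ≤ C u) :
    ∑ w, pebbleMove C u v w < ∑ w, C w := by
  have h := sum_mul_pebbleMove (fun _ => 1) huv hu
  simp only [one_mul] at h
  exact_mod_cast (show (↑(∑ w, pebbleMove C u v w) : ℝ) < ∑ w, C w by push_cast; linarith)

end Moves

lemma solvable_of_one_le {C : V → ℕ} (h : 1 ≤ C r) : Solvable G r C :=
  ⟨C, .refl, h⟩

lemma Solvable.of_isPebblingMove {C C' : V → ℕ} (hmove : IsPebblingMove G C C')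
    (h : Solvable G r C') : Solvable G r C :=
  let ⟨D, hD, hr⟩ := h
  ⟨D, .head hmove hD, hr⟩

lemma IsPebblingMove.comp_iso {W : Type*} {H : SimpleGraph W} (φ : G ≃g H) {C C' : W → ℕ}
    (h : IsPebblingMove H C C') : IsPebblingMove G (C ∘ φ) (C' ∘ φ) := by
  obtain ⟨u, v, huv, hu, hC'u, hC'v, hC'w⟩ := h
  refine ⟨φ.symm u, φ.symm v, φ.symm.map_adj_iff.mpr huv, by simpa using hu,
    by simpa using hC'u, by simpa using hC'v, fun w hwu hwv => hC'w (φ w) ?_ ?_⟩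
  · exact fun h => hwu (by simp [← h])
  · exact fun h => hwv (by simp [← h])

lemma Solvable.comp_iso {W : Type*} {H : SimpleGraph W} (φ : G ≃g H) {C : W → ℕ}
    (h : Solvable H (φ r) C) : Solvable G r (C ∘ φ) :=
  let ⟨D, hD, hr⟩ := h
  ⟨D ∘ φ, hD.lift (· ∘ φ) fun _ _ => IsPebblingMove.comp_iso φ, hr⟩

lemma pebblingNumber_le_of_not_solvable [Fintype V] {m : ℕ}
    (h : ∀ C : V → ℕ, ¬ Solvable G r C → ∑ v, C v ≤ m) : pebblingNumber G r ≤ m + 1 :=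
  Nat.sInf_le fun C hC => by_contra fun hns => by have := h C hns; omega

namespace TreeStrategy

variable (S : TreeStrategy G r)

lemma mem_verts_of_weight_pos {v : V} (h : 0 < S.weight v) : v ∈ S.verts ∧ v ≠ r := by
  refine ⟨by_contra fun hv => ?_, fun hvr => ?_⟩
  · exact h.ne' (S.weight_zero v hv)
  · exact h.ne' (hvr ▸ S.weight_root)

theorem sum_weight_mul_le_of_not_solvable [Fintype V] {C : V → ℕ} (hC : ¬ Solvable G r C) :
    ∑ v, S.weight v * C v ≤ ∑ v, S.weight v := by
  classical
  induction hn : ∑ v, C v using Nat.strong_induction_on generalizing C with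
  | _ n ih =>
  by_cases hmove : ∃ v, 0 < S.weight v ∧ 2 ≤ C v
  · obtain ⟨v, hwv, hCv⟩ := hmove
    obtain ⟨hv, hvr⟩ := S.mem_verts_of_weight_pos hwv
    have hnadj : ¬ G.Adj v r := fun hadj => hC <|
      (solvable_of_one_le (by simp [pebbleMove])).of_isPebblingMove
        (isPebblingMove_pebbleMove hadj hCv)
    have hadj : G.Adj v (S.parent v) := (S.parent_adj v hv hvr).symm
    have hC' : ¬ Solvable G r (pebbleMove C v (S.parent v)) :=
      fun h => hC (h.of_isPebblingMove (isPebblingMove_pebbleMove hadj hCv))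
    calc ∑ w, S.weight w * C w
        ≤ ∑ w, S.weight w * C w - 2 * S.weight v + S.weight (S.parent v) := by
          linarith [S.weight_parent v hv hvr hnadj]
      _ = ∑ w, S.weight w * pebbleMove C v (S.parent v) w :=
          (sum_mul_pebbleMove _ hadj.ne hCv).symm
      _ ≤ ∑ w, S.weight w := ih _ (hn ▸ sum_pebbleMove_lt hadj.ne hCv) hC' rfl
  · push Not at hmove
    refine sum_le_sum fun v _ => ?_
    rcases (S.weight_nonneg v).eq_or_lt with h0 | hpos
    · simp [← h0]
    · have hCv : C v ≤ 1 := by linarith [hmove v hpos]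
      exact mul_le_of_le_one_right (S.weight_nonneg v) (by exact_mod_cast hCv)

theorem sum_weight_add_weight_comp_mul_le_of_not_solvable [Fintype V] (σ : G ≃g G)
    (hσ : σ r = r) {C : V → ℕ} (hC : ¬ Solvable G r C) :
    ∑ v, (S.weight v + S.weight (σ v)) * C v ≤ ∑ v, (S.weight v + S.weight (σ v)) := by
  have hCσ : ¬ Solvable G r (C ∘ σ.symm) := fun h => hC <| by
    simpa [Function.comp_def] using Solvable.comp_iso σ (hσ.symm ▸ h :)
  have hσsum : ∀ f : V → ℝ, ∑ v, f (σ v) = ∑ v, f v := fun f => σ.toEquiv.sum_comp f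
  have key := S.sum_weight_mul_le_of_not_solvable hCσ
  rw [← hσsum] at key
  simp only [Function.comp_apply, RelIso.symm_apply_apply] at key
  simp only [add_mul, sum_add_distrib]
  linarith [S.sum_weight_mul_le_of_not_solvable hC, hσsum S.weight]

end TreeStrategy

theorem sum_mul_le_of_symmetric_cover [Fintype V] {ι : Type*} [Fintype ι] (σ : G ≃g G)
    (hσ : σ r = r) {T : ℝ} (S : ι → TreeStrategy G r)
    (hcov : ∀ v, v ≠ r → T ≤ ∑ t, ((S t).weight v + (S t).weight (σ v)))
    {C : V → ℕ} (hC : ¬ Solvable G r C) :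
    T * ∑ v, (C v : ℝ) ≤ ∑ t, ∑ v, ((S t).weight v + (S t).weight (σ v)) := by
  have hCr : C r = 0 :=
    by_contra fun h => hC (solvable_of_one_le (Nat.one_le_iff_ne_zero.mpr h))
  calc T * ∑ v, (C v : ℝ)
      ≤ ∑ v, (∑ t, ((S t).weight v + (S t).weight (σ v))) * C v := by
        rw [mul_sum]
        refine sum_le_sum fun v _ => ?_
        by_cases hvr : v = r
        · simp [hvr, hCr]
        · exact mul_le_mul_of_nonneg_right (hcov v hvr) (Nat.cast_nonneg _)
    _ = ∑ t, ∑ v, ((S t).weight v + (S t).weight (σ v)) * C v := by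
        simp only [sum_mul]; exact sum_comm
    _ ≤ _ := sum_le_sum fun t _ =>
        (S t).sum_weight_add_weight_comp_mul_le_of_not_solvable σ hσ hC

theorem pebblingNumber_le_of_symmetric_cover [Fintype V] [DecidableEq V] {ι : Type*}
    [Fintype ι] (σ : G ≃g G) (hσ : σ r = r) {T : ℝ} (hT : 0 < T) (S : ι → TreeStrategy G r)
    (hcov : ∀ v, v ≠ r → T ≤ ∑ t, ((S t).weight v + (S t).weight (σ v))) :
    pebblingNumber G r ≤
      ⌊(∑ t, ∑ v ∈ univ.erase r, ((S t).weight v + (S t).weight (σ v))) / T⌋₊ + 1 := by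
  refine pebblingNumber_le_of_not_solvable fun C hC => Nat.le_floor ?_
  have hroot : ∀ t, ∑ v ∈ univ.erase r, ((S t).weight v + (S t).weight (σ v)) =
      ∑ v, ((S t).weight v + (S t).weight (σ v)) :=
    fun t => sum_erase _ (by simp [hσ, (S t).weight_root])
  rw [le_div_iff₀ hT, sum_congr rfl fun t _ => hroot t, mul_comm]
  exact_mod_cast sum_mul_le_of_symmetric_cover σ hσ S hcov hC

end Pebbling

theorem symmetric_pebbling_bound_general {V : Type*} [Fintype V] [DecidableEq V]
    (G : SimpleGraph V) (r₀ : V)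
    (T : ℕ) (hTpos : 0 < T)
    (S : Fin (T / 2) → TreeStrategy (G □ G) (r₀, r₀))
    (hcov : ∀ v : V × V, v ≠ (r₀, r₀) →
      (T : ℝ) ≤ ∑ t : Fin (T / 2), ((S t).weight v + (S t).weight v.swap)) :
    pebblingNumber (G □ G) (r₀, r₀) ≤
      ⌊(∑ t : Fin (T / 2), ∑ v ∈ Finset.univ.erase (r₀, r₀),
          ((S t).weight v + (S t).weight v.swap)) / (T : ℝ)⌋₊ + 1 :=
  pebblingNumber_le_of_symmetric_cover (SimpleGraph.boxProdComm G G) rfl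
    (Nat.cast_pos.mpr hTpos) S hcov

/-- Symmetric covering bound: if `T` is an even positive integer and `w_1, …, w_{T/2}` are
weight functions of tree strategies of `G □ G` rooted at `r = (r₀, r₀)` such that
`Σ_t (w_t(v) + w_t(σ v)) ≥ T` for every `v ≠ r` (where `σ` swaps coordinates), then
`π(G □ G, r) ≤ ⌊ẑ/T⌋ + 1` with `ẑ = Σ_t Σ_{v ≠ r} (w_t(v) + w_t(σ v))`. -/
theorem symmetric_pebbling_bound {V : Type*} [Fintype V] [DecidableEq V]
    (G : SimpleGraph V) (hG : G.Connected) (r₀ : V)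
    (T : ℕ) (hTpos : 0 < T) (hTeven : Even T)
    (S : Fin (T / 2) → TreeStrategy (G □ G) (r₀, r₀))
    (hcov : ∀ v : V × V, v ≠ (r₀, r₀) →
      (T : ℝ) ≤ ∑ t : Fin (T / 2), ((S t).weight v + (S t).weight v.swap)) :
    pebblingNumber (G □ G) (r₀, r₀) ≤
      ⌊(∑ t : Fin (T / 2), ∑ v ∈ Finset.univ.erase (r₀, r₀),
          ((S t).weight v + (S t).weight v.swap)) / (T : ℝ)⌋₊ + 1 :=
  symmetric_pebbling_bound_general G r₀ T hTpos S hcov
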